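/- arXiv:0907.4276 — 2 statements merged into one kernel-verified Lean document; each statement's English description precedes it below -/
import Mathlib

section
/- Let (X,r) be a square-free solution of arbitrary cardinality with mpl(X,r) = m < ∞ and m ≥ 2. Then for every x ∈ X the (m−1)-st retract class [x^{(m−1)}] = {ξ ∈ X : ξ and x have equal images in Ret^{m−1}(X,r)} is a proper subset of X which is invariant under the group G(X,r) generated by the left translations, and it contains the G(X,r)-orbit of x. In particular G(X,r) acts intransitively on X. -/
namespace YBPaper

variable {X : Type*}

/-- Left translation: `lact r x y = ˣy`. -/
def lact (r : X × X → X × X) (x y : X) : X := (r (x, y)).1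

/-- Right translation: `ract r x y = xʸ`. -/
def ract (r : X × X → X × X) (x y : X) : X := (r (x, y)).2

def r12 (r : X × X → X × X) : X × X × X → X × X × X :=
  fun p => ((r (p.1, p.2.1)).1, (r (p.1, p.2.1)).2, p.2.2)

def r23 (r : X × X → X × X) : X × X × X → X × X × X :=
  fun p => (p.1, r (p.2.1, p.2.2))

/-- A non-degenerate involutive square-free set-theoretic solution of the YBE. -/
structure IsSquareFreeSolution (r : X × X → X × X) : Prop where
  nondegL : ∀ x : X, Function.Bijective fun y => (r (x, y)).1
  nondegR : ∀ y : X, Function.Bijective fun x => (r (x, y)).2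
  invol : ∀ p : X × X, r (r p) = p
  sqfree : ∀ x : X, r (x, x) = (x, x)
  braided : ∀ p : X × X × X, r12 r (r23 r (r12 r p)) = r23 r (r12 r (r23 r p))

/-- `relk l k x y` means the images of `x` and `y` in the `k`-th retract coincide. -/
def relk (l : X → X → X) : ℕ → X → X → Prop
  | 0 => fun x y => x = y
  | (k+1) => fun x y => ∀ z : X, relk l k (l x z) (l y z)

/-- `mplLe l m` : the `m`-th retract is a one-element solution, i.e. `mpl ≤ m`. -/
def mplLe (l : X → X → X) (m : ℕ) : Prop := ∀ x y : X, relk l m x y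

/-- `mplEq l m` : the multipermutation level is exactly `m`. -/
def mplEq (l : X → X → X) (m : ℕ) : Prop := mplLe l m ∧ ∀ k < m, ¬ mplLe l k

/-- The set of left translations, as permutations. -/
def lperms (r : X × X → X × X) : Set (Equiv.Perm X) :=
  {σ : Equiv.Perm X | ∃ x : X, ∀ y : X, σ y = (r (x, y)).1}

/-- The YB permutation group `𝒢(X,r)`, generated by the left translations. -/
def Gcal (r : X × X → X × X) : Subgroup (Equiv.Perm X) := Subgroup.closure (lperms r)

/-!
By square-freeness `ˣx = x`. Since `mpl(X,r) ≤ m`, any `x, y, z` satisfy `ˣz ∼ₘ₋₁ ʸz`, and `z = y`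
gives `ˣy ∼ₘ₋₁ y`: every left translation, hence every element of `𝒢(X,r)`, moves each point
inside its `(m-1)`-st retract class. Since `mpl(X,r) > m - 1`, there are at least two such classes.
-/

section Equivalence

variable {R : X → X → Prop}

theorem _root_.Equivalence.apply_rel_of_mem_closure (hR : Equivalence R) {S : Set (Equiv.Perm X)}
    (hS : ∀ σ ∈ S, ∀ ξ, R (σ ξ) ξ) {σ : Equiv.Perm X} (hσ : σ ∈ Subgroup.closure S) (ξ : X) :
    R (σ ξ) ξ := by
  induction hσ using Subgroup.closure_induction generalizing ξ with
  | mem τ hτ => exact hS τ hτ ξ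
  | one => exact hR.refl ξ
  | mul τ τ' _ _ hτ hτ' => exact hR.trans (hτ (τ' ξ)) (hτ' ξ)
  | inv τ _ hτ => simpa using hR.symm (hτ (τ⁻¹ ξ))

theorem _root_.Equivalence.setOf_rel_ne_univ (hR : Equivalence R) {u v : X} (huv : ¬ R u v)
    (x : X) : {ξ | R ξ x} ≠ Set.univ := by
  intro hx
  have hu : u ∈ {ξ | R ξ x} := hx ▸ Set.mem_univ u
  have hv : v ∈ {ξ | R ξ x} := hx ▸ Set.mem_univ v
  exact huv (hR.trans hu (hR.symm hv))

variable {G : Subgroup (Equiv.Perm X)}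

theorem orbit_subset_setOf_rel (hG : ∀ σ ∈ G, ∀ ξ, R (σ ξ) ξ) (x : X) :
    MulAction.orbit G x ⊆ {ξ | R ξ x} := by
  rintro _ ⟨σ, rfl⟩
  exact hG σ σ.2 x

theorem _root_.Equivalence.not_forall_mem_orbit (hR : Equivalence R)
    (hG : ∀ σ ∈ G, ∀ ξ, R (σ ξ) ξ) {u v : X} (huv : ¬ R u v) :
    ¬ ∀ a b : X, b ∈ MulAction.orbit G a :=
  fun htrans => huv (hR.symm (orbit_subset_setOf_rel hG u (htrans u v)))

end Equivalence

theorem relk_equivalence (l : X → X → X) : ∀ k : ℕ, Equivalence (relk l k)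
  | 0 => eq_equivalence
  | k + 1 =>
    let e := relk_equivalence l k
    ⟨fun x z => e.refl (l x z), fun h z => e.symm (h z), fun h₁ h₂ z => e.trans (h₁ z) (h₂ z)⟩

theorem exists_not_relk_of_not_mplLe {l : X → X → X} {k : ℕ} (h : ¬ mplLe l k) :
    ∃ u v : X, ¬ relk l k u v := by
  simpa only [mplLe, not_forall] using h

theorem lact_self {r : X × X → X × X} (h : IsSquareFreeSolution r) (x : X) : lact r x x = x :=
  congrArg Prod.fst (h.sqfree x)

theorem relk_lact_left {r : X × X → X × X} (h : IsSquareFreeSolution r) {k : ℕ}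
    (hk : mplLe (lact r) (k + 1)) (x y : X) : relk (lact r) k (lact r x y) y := by
  simpa only [lact_self h y] using hk x y y

theorem relk_apply_of_mem_Gcal {r : X × X → X × X} (h : IsSquareFreeSolution r) {k : ℕ}
    (hk : mplLe (lact r) (k + 1)) {σ : Equiv.Perm X} (hσ : σ ∈ Gcal r) (ξ : X) :
    relk (lact r) k (σ ξ) ξ := by
  refine (relk_equivalence (lact r) k).apply_rel_of_mem_closure ?_ hσ ξ
  rintro _ ⟨a, ha⟩ y
  rw [ha]
  exact relk_lact_left h hk a y

/-- for `mpl(X,r) = m ≥ 2`, every `(m-1)`-st retract class is a proper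
`𝒢(X,r)`-invariant subset of `X` containing the `𝒢(X,r)`-orbit; hence `𝒢(X,r)` acts
intransitively on `X`. -/
theorem stmt6 {X : Type*} (r : X × X → X × X) (h : IsSquareFreeSolution r)
    (m : ℕ) (hm : 2 ≤ m) (hmpl : mplEq (lact r) m) (x : X) :
    {ξ : X | relk (lact r) (m - 1) ξ x} ≠ Set.univ ∧
    (∀ σ ∈ Gcal r, ∀ ξ : X, relk (lact r) (m - 1) ξ x → relk (lact r) (m - 1) (σ ξ) x) ∧
    MulAction.orbit (↥(Gcal r)) x ⊆ {ξ : X | relk (lact r) (m - 1) ξ x} ∧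
    ¬ ∀ a b : X, b ∈ MulAction.orbit (↥(Gcal r)) a := by
  obtain ⟨k, rfl⟩ : ∃ k, m = k + 1 := ⟨m - 1, by omega⟩
  rw [Nat.add_sub_cancel]
  have hR := relk_equivalence (lact r) k
  have hG : ∀ σ ∈ Gcal r, ∀ ξ, relk (lact r) k (σ ξ) ξ := fun _ hσ =>
    relk_apply_of_mem_Gcal h hmpl.1 hσ
  obtain ⟨u, v, huv⟩ := exists_not_relk_of_not_mplLe (hmpl.2 k (by omega))
  exact ⟨hR.setOf_rel_ne_univ huv x, fun σ hσ ξ hξ => hR.trans (hG σ hσ ξ) hξ,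
    orbit_subset_setOf_rel hG x, hR.not_forall_mem_orbit hG huv⟩

end YBPaper
end

section
/- Let (X,r) be a square-free solution with abelian permutation group G(X,r), and let Y, Z be two distinct G(X,r)-orbits of X. Then for all x, y ∈ Y and α, β ∈ Z the strong-twisted-union conditions hold: L_{ˣα} agrees with L_α on Y, and L_{ᵅx} agrees with L_x on Z; equivalently ^{(ʸα)}x = ᵅx and ^{(ᵝx)}α = ˣα. -/
namespace YBPaper

variable {X : Type*}

/-! If `𝒢(X,r)` is abelian, each left translation `L_α` commutes with every element of
`𝒢(X,r)` and fixes `α` (square-freeness), hence fixes the whole orbit of `α`. Both translations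
appearing in condition l1, `^{ʸα}(^{yᵅ}x) = ʸ(ᵅx)`, then act on points of their own orbit when
`x` and `y` lie in one orbit, and l1 collapses to `^{ʸα}x = ᵅx`. Swapping the roles of the
two orbits gives the second identity. -/

open MulAction

namespace IsSquareFreeSolution

variable {r : X × X → X × X} (h : IsSquareFreeSolution r)
include h

noncomputable def lperm (x : X) : Equiv.Perm X := Equiv.ofBijective _ (h.nondegL x)

lemma lperm_mem_Gcal (x : X) : h.lperm x ∈ Gcal r :=
  Subgroup.subset_closure ⟨x, fun _ => rfl⟩

lemma lact_self (x : X) : lact r x x = x := by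
  simp [lact, h.sqfree]

lemma lact_mem_orbit (x z : X) : lact r x z ∈ orbit (Gcal r) z :=
  ⟨⟨h.lperm x, h.lperm_mem_Gcal x⟩, rfl⟩

lemma ract_mem_orbit (y α : X) : ract r y α ∈ orbit (Gcal r) y := by
  rw [mem_orbit_symm]
  refine ⟨⟨h.lperm (lact r y α), h.lperm_mem_Gcal _⟩, ?_⟩
  show (r (lact r y α, ract r y α)).1 = y
  simp only [lact, ract, Prod.mk.eta, h.invol]

lemma lact_lact_ract (x y z : X) :
    lact r (lact r x y) (lact r (ract r x y) z) = lact r x (lact r y z) := by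
  simpa [r12, r23, lact, ract] using congrArg Prod.fst (h.braided (x, y, z))

variable (hab : ∀ σ ∈ Gcal r, ∀ τ ∈ Gcal r, σ * τ = τ * σ)
include hab

lemma lact_eq_self_of_mem_orbit {α β : X} (hβ : β ∈ orbit (Gcal r) α) : lact r α β = β := by
  obtain ⟨⟨g, hg⟩, rfl⟩ := hβ
  calc lact r α (g α) = (h.lperm α * g) α := rfl
    _ = (g * h.lperm α) α := by rw [hab _ (h.lperm_mem_Gcal α) g hg]
    _ = g α := congrArg g (h.lact_self α)

lemma lact_lact_of_mem_orbit {x y : X} (hx : x ∈ orbit (Gcal r) y) (α : X) :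
    lact r (lact r y α) x = lact r α x := by
  have hO : orbit (Gcal r) x = orbit (Gcal r) y := orbit_eq_iff.mpr hx
  have h_ract : lact r (ract r y α) x = x :=
    h.lact_eq_self_of_mem_orbit hab (orbit_eq_iff.mpr (h.ract_mem_orbit y α) ▸ hx)
  have h_lact : lact r y (lact r α x) = lact r α x :=
    h.lact_eq_self_of_mem_orbit hab (hO ▸ h.lact_mem_orbit α x)
  simpa only [h_ract, h_lact] using h.lact_lact_ract y α x

end IsSquareFreeSolution

theorem stmt8_general {X : Type*} (r : X × X → X × X) (h : IsSquareFreeSolution r)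
    (hab : ∀ σ ∈ Gcal r, ∀ τ ∈ Gcal r, σ * τ = τ * σ)
    (y0 z0 : X) :
    ∀ x ∈ MulAction.orbit (↥(Gcal r)) y0, ∀ y ∈ MulAction.orbit (↥(Gcal r)) y0,
      ∀ α ∈ MulAction.orbit (↥(Gcal r)) z0, ∀ β ∈ MulAction.orbit (↥(Gcal r)) z0,
        lact r (lact r y α) x = lact r α x ∧ lact r (lact r β x) α = lact r x α := by
  intro x hx y hy α hα β hβ
  exact ⟨h.lact_lact_of_mem_orbit hab (orbit_eq_iff.mpr hy ▸ hx) α,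
    h.lact_lact_of_mem_orbit hab (orbit_eq_iff.mpr hβ ▸ hα) x⟩

/-- if `𝒢(X,r)` is abelian, then any two distinct orbits satisfy the
strong-twisted-union conditions: `^{(ʸα)}x = ᵅx` and `^{(ᵝx)}α = ˣα`. -/
theorem stmt8 {X : Type*} (r : X × X → X × X) (h : IsSquareFreeSolution r)
    (hab : ∀ σ ∈ Gcal r, ∀ τ ∈ Gcal r, σ * τ = τ * σ)
    (y0 z0 : X)
    (hdist : MulAction.orbit (↥(Gcal r)) y0 ≠ MulAction.orbit (↥(Gcal r)) z0) :
    ∀ x ∈ MulAction.orbit (↥(Gcal r)) y0, ∀ y ∈ MulAction.orbit (↥(Gcal r)) y0,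
      ∀ α ∈ MulAction.orbit (↥(Gcal r)) z0, ∀ β ∈ MulAction.orbit (↥(Gcal r)) z0,
        lact r (lact r y α) x = lact r α x ∧ lact r (lact r β x) α = lact r x α :=
  stmt8_general r h hab y0 z0

end YBPaper
end
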